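/- arXiv:1710.10474 — 2 statements merged into one kernel-verified Lean document; each statement's English description precedes it below -/
import Mathlib

section
/- Suppose some completion X₀ ∈ 𝒳 realizes the black box, i.e., C_{X₀}(I) = 𝒞(I) for every input sequence I. Then a set 𝐈 of input sequences is a discriminating set if and only if for all completions X₁, X₂ ∈ 𝒳 that are consistent with 𝒞 on 𝐈 and for every input sequence I, C_{X₁}(I) = C_{X₂}(I). (This is the correctness of the pairwise-comparison decision procedure for deciding whether 𝐈 is discriminating.) -/
/-- A Mealy machine with state set `S`, input alphabet `Inp`, output alphabet `Out`. -/
structure Mealy (S Inp Out : Type) where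
  s0 : S
  tr : S → Inp → S
  om : S → Inp → Out

/-- Output sequence produced starting from a given state. -/
def Mealy.outFrom {S Inp Out : Type} (M : Mealy S Inp Out) : S → List Inp → List Out
  | _, [] => []
  | s, i :: is => M.om s i :: M.outFrom (M.tr s i) is

/-- The output sequence `M(I)` of a Mealy machine on input sequence `I`,
starting from the initial state. -/
def Mealy.output {S Inp Out : Type} (M : Mealy S Inp Out) (I : List Inp) : List Out :=
  M.outFrom M.s0 I

/-- Correctness of the pairwise-comparison decision procedure: if some completion realizes
the black box, then Iset is discriminating iff any two completions consistent with the black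
box on Iset agree on every input sequence. -/
theorem discriminating_iff_pairwise_agreement
    {S T Inp Out 𝒳 : Type}
    (s0 : S) (C : 𝒳 → Mealy S Inp Out)
    (hs0 : ∀ X : 𝒳, (C X).s0 = s0)
    (BB : Mealy T Inp Out)
    (Iset : Set (List Inp))
    (hrealize : ∃ X₀ : 𝒳, ∀ I : List Inp, (C X₀).output I = BB.output I) :
    (∀ X : 𝒳, (∀ I ∈ Iset, (C X).output I = BB.output I) →
      ∀ I : List Inp, (C X).output I = BB.output I) ↔
    (∀ X₁ X₂ : 𝒳,
      (∀ I ∈ Iset, (C X₁).output I = BB.output I) →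
      (∀ I ∈ Iset, (C X₂).output I = BB.output I) →
      ∀ I : List Inp, (C X₁).output I = (C X₂).output I) := by
  obtain ⟨X₀, hX₀⟩ := hrealize
  constructor
  · intro h X₁ X₂ h1 h2 I
    rw [h X₁ h1 I, h X₂ h2 I]
  · intro h X hX I
    calc (C X).output I = (C X₀).output I :=
          h X X₀ hX (fun I _ => hX₀ I) I
      _ = BB.output I := hX₀ I
end

section
/- Suppose the index set 𝒳 of completions is finite with cardinality N ≥ 1 and that a correct completion exists. Then there exists a discriminating set 𝐈 of input sequences with |𝐈| ≤ N − 1. (This is the termination guarantee of the iterative attack: since each counterexample sequence eliminates at least one remaining completion and the correct completion is never eliminated, at most N − 1 input sequences suffice to decamouflage the circuit.) -/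
/-- Termination guarantee of the iterative attack: if there are N ≥ 1 completions and a
correct one exists, then some discriminating set of at most N - 1 input sequences exists. -/
theorem exists_small_discriminating_set
    {S T Inp Out 𝒳 : Type} [Fintype 𝒳]
    (s0 : S) (C : 𝒳 → Mealy S Inp Out)
    (hs0 : ∀ X : 𝒳, (C X).s0 = s0)
    (BB : Mealy T Inp Out)
    (N : ℕ) (hN : Fintype.card 𝒳 = N) (hN1 : 1 ≤ N)
    (hcorrect : ∃ Xstar : 𝒳, ∀ I : List Inp, (C Xstar).output I = BB.output I) :
    ∃ Iset : Finset (List Inp), Iset.card ≤ N - 1 ∧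
      ∀ X : 𝒳, (∀ I ∈ Iset, (C X).output I = BB.output I) →
        ∀ I : List Inp, (C X).output I = BB.output I := by
  classical
  obtain ⟨Xstar, hstar⟩ := hcorrect
  set bad : Finset 𝒳 := Finset.univ.filter
    (fun X => ¬ ∀ I : List Inp, (C X).output I = BB.output I) with hbad
  have hwit : ∀ X ∈ bad, ∃ I : List Inp, (C X).output I ≠ BB.output I := by
    intro X hX
    simp only [hbad, Finset.mem_filter] at hX
    exact not_forall.mp hX.2
  choose w hw using hwit
  refine ⟨bad.attach.image (fun X => w X.1 X.2), ?_, ?_⟩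
  · calc (bad.attach.image (fun X => w X.1 X.2)).card
        ≤ bad.attach.card := Finset.card_image_le
      _ = bad.card := Finset.card_attach
      _ ≤ (Finset.univ \ {Xstar}).card := by
          apply Finset.card_le_card
          intro X hX
          simp only [hbad, Finset.mem_filter] at hX
          simp only [Finset.mem_sdiff, Finset.mem_univ, Finset.mem_singleton, true_and]
          rintro rfl
          exact hX.2 hstar
      _ ≤ N - 1 := by
          rw [Finset.card_sdiff_of_subset (by simp), Finset.card_singleton, Finset.card_univ, hN]
  · intro X hX I
    by_contra hne
    have hXbad : X ∈ bad := by
      simp only [hbad, Finset.mem_filter, Finset.mem_univ, true_and]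
      exact fun h => hne (h I)
    have := hX (w X hXbad) (Finset.mem_image.mpr ⟨⟨X, hXbad⟩, Finset.mem_attach _ _, rfl⟩)
    exact hw X hXbad this
end
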